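/- Let X, Y be real normed spaces, A : X → Y continuous linear, and Q ⊆ Y a nonempty closed convex cone, a' ∈ X*. Then the equivalence [ (∀ x, A x ∈ Q ⟹ ⟨a', x⟩ ≥ 0) ⟺ (∃ μ ∈ Q⁺ with A*μ = a') ] holds if and only if A*(Q⁺) is weak-* closed regarding {a'}, i.e., either a' ∈ A*(Q⁺) or a' is not in the weak-* closure of A*(Q⁺). -/

import Mathlib

/-!
The weak-* closure of `A*(Q⁺)` is the dual cone of `A⁻¹(Q)`. Indeed, a point outside the closed
cone is separated from it by a weak-* continuous functional, which is evaluation at some `x : X`;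
nonnegativity on `A*(Q⁺)` says `μ (A x) ≥ 0` for all `μ ∈ Q⁺`, so `A x ∈ Q` by the bipolar theorem
in `Y`. Hence the primal condition says `a' ∈ closure A*(Q⁺)`, the dual one says `a' ∈ A*(Q⁺)`,
and these are equivalent exactly when `A*(Q⁺)` is weak-* closed regarding `{a'}`.
-/

open Set

def toWeakDual {X : Type*} [NormedAddCommGroup X] [NormedSpace ℝ X]
    (f : X →L[ℝ] ℝ) : WeakDual ℝ X := f

instance WeakDual.instLocallyConvexSpace {X : Type*} [AddCommGroup X] [TopologicalSpace X]
    [Module ℝ X] : LocallyConvexSpace ℝ (WeakDual ℝ X) :=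
  WeakBilin.locallyConvexSpace

namespace ProperCone

variable {E : Type*} [AddCommGroup E] [TopologicalSpace E] [Module ℝ E]

def ofIsClosedConvexCone (Q : Set E) (h0 : (0 : E) ∈ Q) (hcl : IsClosed Q) (hconv : Convex ℝ Q)
    (hcone : ∀ c : ℝ, 0 ≤ c → ∀ y ∈ Q, c • y ∈ Q) : ProperCone ℝ E where
  carrier := Q
  add_mem' {x y} hx hy := by
    have hmid : (2⁻¹ : ℝ) • x + (2⁻¹ : ℝ) • y ∈ Q :=
      hconv hx hy (by norm_num) (by norm_num) (by norm_num)
    have := hcone 2 zero_le_two _ hmid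
    rwa [smul_add, smul_smul, smul_smul, mul_inv_cancel₀ two_ne_zero, one_smul, one_smul] at this
  zero_mem' := h0
  smul_mem' c _ hy := hcone c c.2 _ hy
  isClosed' := hcl

variable [IsTopologicalAddGroup E] [ContinuousSMul ℝ E] [LocallyConvexSpace ℝ E]

theorem mem_iff_forall_dual_nonneg (C : ProperCone ℝ E) {x : E} :
    x ∈ C ↔ ∀ f : StrongDual ℝ E, (∀ y ∈ C, 0 ≤ f y) → 0 ≤ f x := by
  refine ⟨fun hx f hf => hf x hx, fun h => ?_⟩
  by_contra hx
  obtain ⟨f, hfC, hfx⟩ := C.hyperplane_separation_point hx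
  exact hfx.not_ge (h f hfC)

end ProperCone

section AdjointDualCone

variable {X Y : Type*} [NormedAddCommGroup X] [NormedSpace ℝ X]
  [NormedAddCommGroup Y] [NormedSpace ℝ Y]

def adjointDualCone (A : X →L[ℝ] Y) (Q : Set Y) : PointedCone ℝ (WeakDual ℝ X) where
  carrier := {g | ∃ μ : Y →L[ℝ] ℝ, (∀ y ∈ Q, 0 ≤ μ y) ∧ g = toWeakDual (μ.comp A)}
  add_mem' := by
    rintro _ _ ⟨μ, hμ, rfl⟩ ⟨ν, hν, rfl⟩
    exact ⟨μ + ν, fun y hy => add_nonneg (hμ y hy) (hν y hy), rfl⟩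
  zero_mem' := ⟨0, fun _ _ => le_rfl, rfl⟩
  smul_mem' := by
    rintro c _ ⟨μ, hμ, rfl⟩
    exact ⟨(c : ℝ) • μ, fun y hy => mul_nonneg c.2 (hμ y hy), rfl⟩

theorem closure_adjointDualCone (A : X →L[ℝ] Y) (C : ProperCone ℝ Y) :
    closure (adjointDualCone A C : Set (WeakDual ℝ X)) = {g | ∀ x, A x ∈ C → 0 ≤ g x} := by
  apply Subset.antisymm
  · refine closure_minimal ?_ ?_
    · rintro _ ⟨μ, hμ, rfl⟩ x hx
      exact hμ _ hx
    · simp only [ofPred_forall]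
      exact isClosed_iInter fun x => isClosed_iInter fun _ =>
        isClosed_le continuous_const (WeakDual.eval_continuous x)
  · intro g hg
    by_contra hgK
    obtain ⟨f, hfK, hfg⟩ :=
      ProperCone.hyperplane_separation_point (Submodule.closure (adjointDualCone A C)) hgK
    obtain ⟨x, rfl⟩ := LinearMap.dualEmbedding_surjective (topDualPairing ℝ X) f
    have hAx : A x ∈ C := C.mem_iff_forall_dual_nonneg.2 fun μ hμ =>
      hfK _ (subset_closure ⟨μ, hμ, rfl⟩)
    exact hfg.not_ge (hg x hAx)

end AdjointDualCone

/-- Corollary 6 (homogeneous Farkas lemma): for a nonempty closed convex cone `Q ⊆ Y`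
and `a' ∈ X*`, the equivalence "[(∀ x, A x ∈ Q → ⟨a', x⟩ ≥ 0) ⟺ (∃ μ ∈ Q⁺, A*μ = a')]"
holds iff `A*(Q⁺)` is weak-* closed regarding `{a'}`. -/
theorem farkas_homogeneous_dual_characterization {X Y : Type*}
    [NormedAddCommGroup X] [NormedSpace ℝ X] [NormedAddCommGroup Y] [NormedSpace ℝ Y]
    (A : X →L[ℝ] Y) (a' : X →L[ℝ] ℝ) (Q : Set Y)
    (hQne : Q.Nonempty) (hQcl : IsClosed Q) (hQconv : Convex ℝ Q)
    (hQcone : ∀ c : ℝ, 0 ≤ c → ∀ y ∈ Q, c • y ∈ Q)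
    (AQplus : Set (WeakDual ℝ X))
    (hAQ : AQplus = {g : WeakDual ℝ X |
        ∃ μ : Y →L[ℝ] ℝ, (∀ y ∈ Q, 0 ≤ μ y) ∧ g = toWeakDual (μ.comp A)}) :
    ((∀ x : X, A x ∈ Q → 0 ≤ a' x) ↔
        ∃ μ : Y →L[ℝ] ℝ, (∀ y ∈ Q, 0 ≤ μ y) ∧ μ.comp A = a') ↔
      (toWeakDual a' ∈ AQplus ∨ toWeakDual a' ∉ closure AQplus) := by
  have h0 : (0 : Y) ∈ Q := by
    obtain ⟨y, hy⟩ := hQne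
    simpa using hQcone 0 le_rfl y hy
  let C : ProperCone ℝ Y := .ofIsClosedConvexCone Q h0 hQcl hQconv hQcone
  have hK : AQplus = adjointDualCone A C := hAQ
  have hprimal : (∀ x : X, A x ∈ Q → 0 ≤ a' x) ↔ toWeakDual a' ∈ closure AQplus := by
    rw [hK, closure_adjointDualCone]
    rfl
  have hdual : (∃ μ : Y →L[ℝ] ℝ, (∀ y ∈ Q, 0 ≤ μ y) ∧ μ.comp A = a') ↔
      toWeakDual a' ∈ AQplus := by
    rw [hAQ]
    exact exists_congr fun μ => and_congr_right fun _ => eq_comm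
  have hsub : toWeakDual a' ∈ AQplus → toWeakDual a' ∈ closure AQplus := (subset_closure ·)
  rw [hprimal, hdual]
  tauto
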